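/- (Soundness of lex-leader symmetry breaking.) Let m : ℕ and let F be a satisfiable set of PB constraints over V = Fin m. Let G be a set of functions g : (Fin m → Bool) → (Fin m → Bool) such that for every g ∈ G and every assignment α satisfying F, the assignment g(α) also satisfies F. Then there exists an assignment α satisfying F such that for every g ∈ G, α ≤ g(α) in the lexicographic order on Fin m → Bool (with false < true and higher priority to smaller indices). -/

import Mathlib

structure PBConstraint (V : Type) where
  coeff : V → ℤ
  pol : V → Bool
  degree : ℤ

def PBSat {V : Type} [Fintype V] (ρ : V → Bool) (c : PBConstraint V) : Prop :=
  c.degree ≤ ∑ x : V, c.coeff x * (if ρ x = c.pol x then 1 else 0)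

def SatSet {V : Type} [Fintype V] (ρ : V → Bool) (S : Set (PBConstraint V)) : Prop :=
  ∀ c ∈ S, PBSat ρ c

def PBSatisfiable {V : Type} [Fintype V] (S : Set (PBConstraint V)) : Prop :=
  ∃ ρ : V → Bool, SatSet ρ S

/-- The lexicographic order on assignments `Fin m → Bool`
(with `false < true` and higher priority to smaller indices). -/
def LexLe {m : ℕ} (α β : Fin m → Bool) : Prop :=
  α = β ∨ ∃ i : Fin m, (∀ j : Fin m, j < i → α j = β j) ∧
    α i = false ∧ β i = true

theorem lexLe_iff_toLex_le {m : ℕ} {α β : Fin m → Bool} : LexLe α β ↔ toLex α ≤ toLex β := by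
  rw [le_iff_eq_or_lt, toLex_inj]
  simp only [LexLe, ← Bool.lt_iff]
  rfl

theorem Set.Nonempty.exists_forall_lexLe {m : ℕ} {S : Set (Fin m → Bool)} (hS : S.Nonempty) :
    ∃ α ∈ S, ∀ β ∈ S, LexLe α β := by
  obtain ⟨α, hα, hmin⟩ := S.exists_min_image toLex S.toFinite hS
  exact ⟨α, hα, fun β hβ => lexLe_iff_toLex_le.2 (hmin β hβ)⟩

theorem lex_leader_symmetry_breaking_sound (m : ℕ)
    (F : Set (PBConstraint (Fin m)))
    (hFsat : PBSatisfiable F)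
    (G : Set ((Fin m → Bool) → (Fin m → Bool)))
    (hG : ∀ g ∈ G, ∀ α : Fin m → Bool, SatSet α F → SatSet (g α) F) :
    ∃ α : Fin m → Bool, SatSet α F ∧ ∀ g ∈ G, LexLe α (g α) := by
  obtain ⟨α, hα, hleast⟩ := Set.Nonempty.exists_forall_lexLe (S := {α | SatSet α F}) hFsat
  exact ⟨α, hα, fun g hg => hleast (g α) (hG g hg α hα)⟩
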